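/- arXiv:1611.01530 — 5 statements merged into one kernel-verified Lean document; each statement's English description precedes it below -/
import Mathlib

section
/- Let ν be a probability measure on {0,1}^ℕ given by the product of Bernoulli(p) measures with p ≠ 1/2, and let μ be the Dirac measure concentrated on the sequence x = 0^2 1^{2^2} 0^{2^3} 1^{2^4} ⋯ (blocks of 0's and 1's of doubling lengths). Then E_{μ,ν}(k) = ν(x_0^{k−1}), and liminf_{k→∞} −(1/k) log E_{μ,ν}(k) < limsup_{k→∞} −(1/k) log E_{μ,ν}(k); i.e., the limiting rate R does not exist. -/
open MeasureTheory Filter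
open scoped ENNReal

/-- Cylinder set of a `k`-string. -/
def cyl {χ : Type*} {k : ℕ} (ω : Fin k → χ) : Set (ℕ → χ) := {x | ∀ i : Fin k, x (i : ℕ) = ω i}

/-- The `k`-divergence between `μ` and `ν`. -/
noncomputable def div2 {χ : Type*} [MeasurableSpace χ] (μ ν : Measure (ℕ → χ)) (k : ℕ) : ℝ≥0∞ :=
  ∑' ω : Fin k → χ, μ (cyl ω) * ν (cyl ω)

/-- The sequence `0^2 1^(2^2) 0^(2^3) 1^(2^4) ⋯` : position `n` lies in the `t`-th block
(of length `2^t`) where `t = Nat.log 2 (n+2)`, and the block symbol is `1` iff `t` is even. -/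
def xseq (n : ℕ) : Bool := decide (Nat.log 2 (n + 2) % 2 = 0)

/-!
For `μ` the Dirac mass at `x`, `E(k) = ν(x₀ … x_{k-1}) = p ^ aₖ (1 - p) ^ (k - aₖ)`, where
`aₖ` counts the ones among `x₀, …, x_{k-1}`. Hence
`-(1/k) log E(k) = -log (1 - p) - log (p / (1 - p)) · aₖ / k` is an affine function of the
frequency `aₖ / k`, with nonzero slope as `p ≠ 1/2`. For `xseq` the frequency is `2/3` at the end
of every block of ones and at most `1/3` at the end of every block of zeros, so it has no limit;
neither has the (bounded) rate, so its liminf is below its limsup.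
-/

open Finset Topology

theorem liminf_lt_limsup_of_not_tendsto {α β : Type*} [ConditionallyCompleteLinearOrder β]
    [TopologicalSpace β] [OrderTopology β] {l : Filter α} [l.NeBot] {u : α → β}
    (hle : IsBoundedUnder (· ≤ ·) l u) (hge : IsBoundedUnder (· ≥ ·) l u)
    (h : ∀ b, ¬Tendsto u l (𝓝 b)) : liminf u l < limsup u l :=
  (liminf_le_limsup hle hge).lt_of_ne fun heq => h _ (tendsto_of_liminf_eq_limsup heq rfl hle hge)

theorem abs_sub_mul_le {c d t : ℝ} (ht0 : 0 ≤ t) (ht1 : t ≤ 1) : |c - d * t| ≤ |c| + |d| :=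
  calc |c - d * t| ≤ |c| + |d * t| := abs_sub _ _
    _ ≤ |c| + |d| := by
      rw [abs_mul, abs_of_nonneg ht0]
      gcongr
      exact mul_le_of_le_one_right (abs_nonneg d) ht1

theorem div2_dirac {χ : Type*} [MeasurableSpace χ] [MeasurableSingletonClass χ]
    (x : ℕ → χ) (ν : Measure (ℕ → χ)) (k : ℕ) :
    div2 (Measure.dirac x) ν k = ν (cyl fun i : Fin k => x i) := by
  unfold div2
  rw [tsum_eq_single (fun i : Fin k => x i)]
  · simp [cyl]
  · intro ω hω
    have hx : x ∉ cyl ω := fun h => hω (funext fun i => (h i).symm)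
    simp [Measure.dirac_apply, hx]

def onesCount (x : ℕ → Bool) (k : ℕ) : ℕ := ∑ n ∈ range k, (x n).toNat

theorem onesCount_le (x : ℕ → Bool) (k : ℕ) : onesCount x k ≤ k := by
  simpa [onesCount] using sum_le_sum fun n (_ : n ∈ range k) => Bool.toNat_le (x n)

theorem onesCount_add_of_const {x : ℕ → Bool} {m l : ℕ} {b : Bool}
    (h : ∀ i < l, x (m + i) = b) : onesCount x (m + l) = onesCount x m + l * b.toNat := by
  rw [onesCount, sum_range_add,
    sum_congr rfl fun i hi => congrArg Bool.toNat (h i (mem_range.1 hi)), sum_const, card_range,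
    smul_eq_mul, onesCount]

noncomputable def freq (x : ℕ → Bool) (k : ℕ) : ℝ := onesCount x k / k

theorem freq_nonneg (x : ℕ → Bool) (k : ℕ) : 0 ≤ freq x k := by
  unfold freq; positivity

theorem freq_le_one (x : ℕ → Bool) (k : ℕ) : freq x k ≤ 1 :=
  div_le_one_of_le₀ (by exact_mod_cast onesCount_le x k) k.cast_nonneg

theorem log_prod_ite {a b : ℝ} (ha : a ≠ 0) (hb : b ≠ 0) (x : ℕ → Bool) (k : ℕ) :
    Real.log (∏ i : Fin k, if x i then a else b) =
      k * Real.log b + onesCount x k * Real.log (a / b) := by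
  have hterm (n : ℕ) :
      Real.log (if x n then a else b) = Real.log b + (x n).toNat * Real.log (a / b) := by
    cases x n <;> simp [Real.log_div ha hb]
  rw [Real.log_prod fun i _ => by split_ifs <;> assumption,
    Fin.sum_univ_eq_sum_range (fun n => Real.log (if x n then a else b))]
  simp only [hterm, sum_add_distrib, sum_const, card_range, nsmul_eq_mul, ← sum_mul, onesCount,
    Nat.cast_sum]

theorem neg_inv_mul_log_prod_ite {a b : ℝ} (ha : a ≠ 0) (hb : b ≠ 0) (x : ℕ → Bool) {k : ℕ}
    (hk : k ≠ 0) :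
    -(1 / (k : ℝ)) * Real.log (∏ i : Fin k, if x i then a else b) =
      -Real.log b - Real.log (a / b) * freq x k := by
  rw [log_prod_ite ha hb, freq]
  field_simp
  ring

theorem xseq_of_mem_block {t n : ℕ} (h1 : 2 ^ t ≤ n + 2) (h2 : n + 2 < 2 ^ (t + 1)) :
    xseq n = decide (t % 2 = 0) := by
  rw [xseq, Nat.log_eq_of_pow_le_of_lt_pow h1 h2]

/-- Block `t ≥ 1` of `xseq` occupies the positions `2^t - 2, …, 2^(t+1) - 3`. -/
theorem onesCount_xseq_block {t : ℕ} (ht : 1 ≤ t) :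
    onesCount xseq (2 ^ (t + 1) - 2) =
      onesCount xseq (2 ^ t - 2) + 2 ^ t * (decide (t % 2 = 0)).toNat := by
  have h2t : 2 ≤ 2 ^ t := Nat.le_self_pow (by omega) 2
  have hsplit : 2 ^ (t + 1) - 2 = (2 ^ t - 2) + 2 ^ t := by rw [pow_succ]; omega
  rw [hsplit]
  refine onesCount_add_of_const fun i hi => xseq_of_mem_block ?_ ?_ <;> rw [pow_succ] at * <;> omega

theorem onesCount_xseq_block_ends (s : ℕ) :
    3 * onesCount xseq (2 ^ (2 * s + 1) - 2) = 2 * (2 ^ (2 * s + 1) - 2) ∧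
      3 * onesCount xseq (2 ^ (2 * s + 2) - 2) + 2 = 2 ^ (2 * s + 2) - 2 := by
  induction s with
  | zero => decide
  | succ s ih =>
    have hone : onesCount xseq (2 ^ (2 * s + 3) - 2) =
        onesCount xseq (2 ^ (2 * s + 2) - 2) + 2 ^ (2 * s + 2) := by
      simpa using onesCount_xseq_block (t := 2 * s + 2) (by omega)
    have hzero : onesCount xseq (2 ^ (2 * s + 4) - 2) = onesCount xseq (2 ^ (2 * s + 3) - 2) := by
      simpa using onesCount_xseq_block (t := 2 * s + 3) (by omega)
    have h4 : 2 ^ (2 * s + 2) = 4 * 2 ^ (2 * s) := by ring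
    have hpos : 1 ≤ 2 ^ (2 * s) := Nat.one_le_two_pow
    have hpow : 2 ^ (2 * s + 3) = 2 * 2 ^ (2 * s + 2) := by ring
    have hpow' : 2 ^ (2 * s + 4) = 2 * 2 ^ (2 * s + 3) := by ring
    rw [show 2 * (s + 1) + 1 = 2 * s + 3 by ring, show 2 * (s + 1) + 2 = 2 * s + 4 by ring]
    omega

theorem freq_xseq_one_block_end {s : ℕ} (hs : 1 ≤ s) : freq xseq (2 ^ (2 * s + 1) - 2) = 2 / 3 := by
  have hcount := (onesCount_xseq_block_ends s).1
  have hk : 2 ^ 3 ≤ 2 ^ (2 * s + 1) := Nat.pow_le_pow_right two_pos (by omega)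
  set k := 2 ^ (2 * s + 1) - 2
  have hk0 : (k : ℝ) ≠ 0 := by exact_mod_cast (by omega : k ≠ 0)
  have hcount' : ((3 * onesCount xseq k : ℕ) : ℝ) = (2 * k : ℕ) := congrArg _ hcount
  push_cast at hcount'
  rw [freq, div_eq_iff hk0]
  linarith

theorem freq_xseq_zero_block_end (s : ℕ) : freq xseq (2 ^ (2 * s + 2) - 2) ≤ 1 / 3 := by
  have hcount := (onesCount_xseq_block_ends s).2
  set k := 2 ^ (2 * s + 2) - 2
  have hcount' : ((3 * onesCount xseq k : ℕ) : ℝ) ≤ k := by exact_mod_cast (by omega)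
  push_cast at hcount'
  refine div_le_of_le_mul₀ k.cast_nonneg (by norm_num) ?_
  linarith

theorem tendsto_two_pow_succ_sub_two : Tendsto (fun m : ℕ => 2 ^ (m + 1) - 2) atTop atTop := by
  refine tendsto_atTop_mono (fun m => ?_) tendsto_id
  have := Nat.lt_two_pow_self (n := m)
  rw [id, pow_succ]
  omega

theorem not_tendsto_freq_xseq (ℓ : ℝ) : ¬Tendsto (freq xseq) atTop (𝓝 ℓ) := by
  intro h
  have hone : Tendsto (fun s : ℕ => 2 ^ (2 * s + 1) - 2) atTop atTop :=
    tendsto_two_pow_succ_sub_two.comp (StrictMono.tendsto_atTop fun a b hab => by omega)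
  have hzero : Tendsto (fun s : ℕ => 2 ^ (2 * s + 1 + 1) - 2) atTop atTop :=
    tendsto_two_pow_succ_sub_two.comp (StrictMono.tendsto_atTop fun a b hab => by omega)
  have hhigh : ℓ = 2 / 3 :=
    tendsto_nhds_unique_of_eventuallyEq (h.comp hone) tendsto_const_nhds
      (eventually_ge_atTop 1 |>.mono fun s hs => freq_xseq_one_block_end hs)
  have hlow : ℓ ≤ 1 / 3 := le_of_tendsto' (h.comp hzero) freq_xseq_zero_block_end
  linarith

theorem divergence_rate_may_not_exist_general (μ ν : Measure (ℕ → Bool)) (p : ℝ)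
    (hp0 : 0 < p) (hp1 : p < 1) (hp : p ≠ 1 / 2)
    (hμ : μ = Measure.dirac xseq)
    (hν : ∀ (k : ℕ) (ω : Fin k → Bool),
      ν (cyl ω) = ENNReal.ofReal (∏ i : Fin k, if ω i then p else 1 - p)) :
    (∀ k : ℕ, div2 μ ν k = ν (cyl (fun i : Fin k => xseq (i : ℕ)))) ∧
      liminf (fun k : ℕ => -(1 / (k : ℝ)) * Real.log (div2 μ ν k).toReal) atTop <
        limsup (fun k : ℕ => -(1 / (k : ℝ)) * Real.log (div2 μ ν k).toReal) atTop := by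
  have hdiv (k : ℕ) : div2 μ ν k = ν (cyl fun i : Fin k => xseq i) := hμ ▸ div2_dirac xseq ν k
  refine ⟨hdiv, ?_⟩
  set rate := fun k : ℕ => -(1 / (k : ℝ)) * Real.log (div2 μ ν k).toReal
  set c := -Real.log (1 - p)
  set d := Real.log (p / (1 - p))
  have hq : 1 - p ≠ 0 := by linarith
  have hd : d ≠ 0 := Real.log_ne_zero_of_pos_of_ne_one (div_pos hp0 (by linarith))
    fun h => hp (by rw [div_eq_one_iff_eq hq] at h; linarith)
  have hrate : rate =ᶠ[atTop] fun k => c - d * freq xseq k := by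
    filter_upwards [eventually_ne_atTop 0] with k hk
    change -(1 / (k : ℝ)) * Real.log (div2 μ ν k).toReal = _
    rw [hdiv, hν, ENNReal.toReal_ofReal (prod_nonneg fun i _ => by split_ifs <;> linarith),
      neg_inv_mul_log_prod_ite hp0.ne' hq xseq hk]
  have hbdd : ∀ᶠ k in atTop, |rate k| ≤ |c| + |d| :=
    hrate.mono fun k hk => hk ▸ abs_sub_mul_le (freq_nonneg xseq k) (freq_le_one xseq k)
  obtain ⟨hle, hge⟩ := isBoundedUnder_le_abs.mp (isBoundedUnder_of_eventually_le hbdd)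
  refine liminf_lt_limsup_of_not_tendsto hle hge fun L hL => not_tendsto_freq_xseq ((c - L) / d) ?_
  refine ((tendsto_const_nhds.sub hL).div_const d).congr' ?_
  filter_upwards [hrate] with k hk
  rw [hk]
  field_simp
  ring

theorem divergence_rate_may_not_exist (μ ν : Measure (ℕ → Bool))
    [IsProbabilityMeasure μ] [IsProbabilityMeasure ν] (p : ℝ)
    (hp0 : 0 < p) (hp1 : p < 1) (hp : p ≠ 1 / 2)
    (hμ : μ = Measure.dirac xseq)
    (hν : ∀ (k : ℕ) (ω : Fin k → Bool),
      ν (cyl ω) = ENNReal.ofReal (∏ i : Fin k, if ω i then p else 1 - p)) :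
    (∀ k : ℕ, div2 μ ν k = ν (cyl (fun i : Fin k => xseq (i : ℕ)))) ∧
      liminf (fun k : ℕ => -(1 / (k : ℝ)) * Real.log (div2 μ ν k).toReal) atTop <
        limsup (fun k : ℕ => -(1 / (k : ℝ)) * Real.log (div2 μ ν k).toReal) atTop :=
  divergence_rate_may_not_exist_general μ ν p hp0 hp1 hp hμ hν
end

section
/- Suppose f: ℕ → ℝ satisfies the gapped sub-additivity f(i+g+j) ≤ c_g(i,j) + f(i) + f(j) for all positive integers i, j (with fixed gap g ≥ 0), where c_g(i,j) ≤ K(i+j)/[log(i+j)]^{1+ε} for constants K > 0 and ε > 0. Then lim_{n→∞} f(n)/n exists (possibly −∞), i.e., liminf f(n)/n = limsup f(n)/n. -/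
/-!
Suppose `f m ≤ t m` for some large `m`. Doubling with gap along `T₀ = m`, `T_{k+1} = 2 T_k + g`
gives `f T_k ≤ v (T_k + g)` with `v ≈ t + K / (ε log 2 (log m)^ε)`: the normalised costs
`c(T_k, T_k) / 2^(k+1)` are at most `K (m + g) / (log m + (k+1) log 2)^(1+ε)`, a sum that
telescopes to `O((log m)^(-ε))`. Every larger `n` is `T_k + g + j` with `j ≤ n / 2` and
`c(T_k, j) ≤ K n / (log m)^(1+ε)`, so strong induction yields
`f n ≤ (v + 2 K / (log m)^(1+ε)) n + B`. Hence `limsup f n / n ≤ t + o(1)` as `m → ∞` along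
the `m` with `f m ≤ t m`, i.e. `limsup ≤ t` whenever `liminf < t`.
-/

open Filter Finset Real Topology

-- The tangent line of the convex function `z ↦ z ^ (-e)` at `x + b` lies below it at `x`.
lemma mul_div_rpow_one_add_le_rpow_neg_sub {x b e : ℝ} (hx : 0 < x) (hb : 0 ≤ b)
    (he : 0 < e) :
    e * b / (x + b) ^ (1 + e) ≤ x ^ (-e) - (x + b) ^ (-e) := by
  set y := x + b with hy_def
  have hy : 0 < y := by positivity
  have hbern : 1 + e * (b / y) ≤ (y / x) ^ e := by
    have hlog := one_sub_inv_le_log_of_pos (div_pos hy hx)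
    rw [inv_div, show 1 - x / y = b / y by field_simp; rw [hy_def]; ring] at hlog
    rw [rpow_def_of_pos (div_pos hy hx)]
    nlinarith [add_one_le_exp (log (y / x) * e)]
  have hsplit : x ^ (-e) - y ^ (-e) = y ^ (-e) * ((y / x) ^ e - 1) := by
    rw [div_rpow hy.le hx.le, rpow_neg hx.le, rpow_neg hy.le]
    field_simp
  rw [hsplit, rpow_add hy, rpow_one, rpow_neg hy.le, div_le_iff₀ (by positivity)]
  calc e * b = (y ^ e)⁻¹ * (e * (b / y)) * (y * y ^ e) := by field_simp
    _ ≤ (y ^ e)⁻¹ * ((y / x) ^ e - 1) * (y * y ^ e) := by gcongr; linarith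

lemma sum_one_div_rpow_le {a b e : ℝ} (ha : 0 < a) (hb : 0 < b) (he : 0 < e) (k : ℕ) :
    ∑ j ∈ range k, 1 / (a + (j + 1) * b) ^ (1 + e) ≤ a ^ (-e) / (e * b) := by
  set A : ℕ → ℝ := fun j => (a + j * b) ^ (-e)
  have hterm : ∀ j : ℕ, 1 / (a + (j + 1) * b) ^ (1 + e) ≤ (A j - A (j + 1)) / (e * b) := by
    intro j
    have h := mul_div_rpow_one_add_le_rpow_neg_sub (x := a + j * b) (by positivity) hb.le he
    rw [le_div_iff₀ (by positivity), one_div_mul_eq_div]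
    simpa only [A, Nat.cast_succ, add_mul, one_mul, add_assoc] using h
  calc ∑ j ∈ range k, 1 / (a + (j + 1) * b) ^ (1 + e)
      ≤ ∑ j ∈ range k, (A j - A (j + 1)) / (e * b) := sum_le_sum fun j _ => hterm j
    _ = (A 0 - A k) / (e * b) := by rw [← sum_div, sum_range_sub']
    _ ≤ A 0 / (e * b) := by
        gcongr
        exact sub_le_self _ (by positivity)
    _ = a ^ (-e) / (e * b) := by simp [A]

lemma le_two_pow_mul_add_sum {a C : ℕ → ℝ} (h : ∀ k, a (k + 1) ≤ 2 * a k + C k)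
    (k : ℕ) :
    a k ≤ 2 ^ k * (a 0 + ∑ j ∈ range k, C j / 2 ^ (j + 1)) := by
  induction k with
  | zero => simp
  | succ k ih =>
    calc a (k + 1) ≤ 2 * a k + C k := h k
      _ ≤ 2 * (2 ^ k * (a 0 + ∑ j ∈ range k, C j / 2 ^ (j + 1))) + C k := by gcongr
      _ = _ := by rw [sum_range_succ]; field_simp; ring

lemma exists_two_pow_mul_lt_le {M n : ℕ} (hM : 0 < M) (hn : M < n) :
    ∃ k, 2 ^ k * M < n ∧ n ≤ 2 ^ (k + 1) * M := by
  refine ⟨Nat.log 2 ((n - 1) / M), ?_, ?_⟩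
  · have := Nat.pow_log_le_self 2 (x := (n - 1) / M) (Nat.div_pos (by omega) hM).ne'
    have := (Nat.le_div_iff_mul_le hM).1 this
    omega
  · have := (Nat.div_lt_iff_lt_mul hM).1 (Nat.lt_pow_succ_log_self one_lt_two ((n - 1) / M))
    rw [Nat.succ_eq_add_one] at this
    omega

lemma exists_le_add_two_mul_of_dyadic_step (u : ℕ → ℝ) {M : ℕ} (hM : 0 < M) {W : ℝ}
    (hW : 0 ≤ W) (hstep : ∀ k j, 0 < j → j ≤ 2 ^ k * M →
      u (2 ^ k * M + j) ≤ u j + W * (2 ^ k * M + j : ℕ)) :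
    ∃ B, ∀ n, 0 < n → u n ≤ B + 2 * W * n := by
  obtain ⟨B, hB⟩ := ((range (M + 1)).image u).bddAbove
  refine ⟨B, fun n => ?_⟩
  induction n using Nat.strong_induction_on with
  | _ n ih =>
    intro hn
    by_cases hnM : n ≤ M
    · have : u n ≤ B := hB (mem_coe.2 (mem_image_of_mem u (mem_range.2 (by omega))))
      have : 0 ≤ 2 * W * n := by positivity
      linarith
    obtain ⟨k, hlt, hle⟩ := exists_two_pow_mul_lt_le hM (not_le.1 hnM)
    obtain ⟨j, rfl⟩ : ∃ j, n = 2 ^ k * M + j := ⟨n - 2 ^ k * M, by omega⟩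
    rw [pow_succ, mul_right_comm] at hle
    have hj : 0 < j ∧ j ≤ 2 ^ k * M := by omega
    have hjn : (2 * j : ℝ) ≤ (2 ^ k * M + j : ℕ) := by
      exact_mod_cast (by omega : 2 * j ≤ 2 ^ k * M + j)
    have hWj := mul_le_mul_of_nonneg_left hjn hW
    calc u (2 ^ k * M + j)
        ≤ u j + W * (2 ^ k * M + j : ℕ) := hstep k j hj.1 hj.2
      _ ≤ B + 2 * W * j + W * (2 ^ k * M + j : ℕ) := by gcongr; exact ih j (by omega) hj.1
      _ ≤ B + 2 * W * (2 ^ k * M + j : ℕ) := by linarith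

lemma mul_div_log_rpow_le {K p x y X : ℝ} (hK : 0 ≤ K) (hp : 0 ≤ p) (hy : 1 < y)
    (hyx : y ≤ x) (hxX : x ≤ X) : K * x / log x ^ p ≤ K * X / log y ^ p := by
  have hlogy : 0 < log y := log_pos hy
  apply div_le_div₀ (by nlinarith) (by gcongr) (by positivity)
  exact rpow_le_rpow hlogy.le (log_le_log (by linarith) hyx) hp

/-- The slope `v + 2 K / (log m)^(1+ε)` of the linear bound obtained from one `m` with
`f m ≤ t m`, where `v` is the slope along the tower `2^k (m + g) - g`. -/
noncomputable def dyadicSlope (K ε t : ℝ) (g m : ℕ) : ℝ :=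
  t * m / (m + g) + K * log m ^ (-ε) / (ε * log 2) + 2 * (K / log m ^ (1 + ε))

lemma tendsto_dyadicSlope {ε : ℝ} (hε : 0 < ε) (K t : ℝ) (g : ℕ) :
    Tendsto (dyadicSlope K ε t g) atTop (𝓝 t) := by
  have hlog : Tendsto (fun m : ℕ => log m) atTop atTop :=
    tendsto_log_atTop.comp tendsto_natCast_atTop_atTop
  have hmean : Tendsto (fun m : ℕ => t * m / (m + g)) atTop (𝓝 t) := by
    simpa [mul_div_assoc] using (tendsto_natCast_div_add_atTop (g : ℝ)).const_mul t
  have hsum : Tendsto (fun m : ℕ => K * log m ^ (-ε) / (ε * log 2)) atTop (𝓝 0) := by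
    simpa using (((tendsto_rpow_neg_atTop hε).comp hlog).const_mul K).div_const (ε * log 2)
  have hcost : Tendsto (fun m : ℕ => K / log m ^ (1 + ε)) atTop (𝓝 0) :=
    tendsto_const_nhds.div_atTop ((tendsto_rpow_atTop (by linarith)).comp hlog)
  unfold dyadicSlope
  simpa only [add_zero, mul_zero] using (hmean.add hsum).add (hcost.const_mul 2)

def gapTower (m g k : ℕ) : ℕ := 2 ^ k * (m + g) - g

lemma gapTower_add_gap (m g k : ℕ) : gapTower m g k + g = 2 ^ k * (m + g) :=
  Nat.sub_add_cancel ((Nat.le_add_left g m).trans (Nat.le_mul_of_pos_left _ (by positivity)))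

lemma gapTower_zero (m g : ℕ) : gapTower m g 0 = m := by simp [gapTower]

lemma gapTower_succ (m g k : ℕ) :
    gapTower m g (k + 1) = gapTower m g k + g + gapTower m g k := by
  have h := gapTower_add_gap m g k
  have h' := gapTower_add_gap m g (k + 1)
  rw [pow_succ, mul_right_comm] at h'
  omega

lemma two_pow_mul_le_gapTower (m g k : ℕ) : 2 ^ k * m ≤ gapTower m g k := by
  have h := gapTower_add_gap m g k
  have : g ≤ 2 ^ k * g := Nat.le_mul_of_pos_left g (by positivity)
  rw [mul_add] at h
  omega

lemma le_gapTower (m g k : ℕ) : m ≤ gapTower m g k :=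
  (Nat.le_mul_of_pos_left m (by positivity)).trans (two_pow_mul_le_gapTower m g k)

lemma gapTower_pos {m : ℕ} (hm : 0 < m) (g k : ℕ) : 0 < gapTower m g k :=
  hm.trans_le (le_gapTower m g k)

section GappedSubadditive

variable {f : ℕ → ℝ} {c : ℕ → ℕ → ℝ} {g : ℕ} {K ε : ℝ}

lemma cost_gapTower_div_le (hK : 0 ≤ K) (hε : 0 < ε)
    (hc : ∀ i j : ℕ, 0 < i → 0 < j →
      c i j ≤ K * ((i : ℝ) + j) / log ((i : ℝ) + j) ^ ((1 : ℝ) + ε))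
    {m : ℕ} (hm : 2 ≤ m) (k : ℕ) :
    c (gapTower m g k) (gapTower m g k) / 2 ^ (k + 1)
      ≤ K * (m + g) * (1 / (log m + (k + 1) * log 2) ^ (1 + ε)) := by
  set T := gapTower m g k
  have hT : 0 < T := gapTower_pos (by omega) g k
  have hlow : (2 : ℝ) ^ (k + 1) * m ≤ (T : ℝ) + T := by
    have : ((2 ^ k * m : ℕ) : ℝ) ≤ T := by exact_mod_cast two_pow_mul_le_gapTower m g k
    push_cast at this; rw [pow_succ]; linarith
  have hhigh : (T : ℝ) + T ≤ 2 ^ (k + 1) * (m + g) := by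
    have : (T : ℝ) + g = 2 ^ k * (m + g) := by exact_mod_cast gapTower_add_gap m g k
    rw [pow_succ]; linarith [g.cast_nonneg (α := ℝ)]
  have hlog : log ((2 : ℝ) ^ (k + 1) * m) = log m + (k + 1) * log 2 := by
    rw [log_mul (by positivity) (by positivity), log_pow]; push_cast; ring
  have hm1 : (1 : ℝ) < 2 ^ (k + 1) * m :=
    one_lt_mul_of_le_of_lt (one_le_pow₀ one_le_two) (by exact_mod_cast hm)
  rw [div_le_iff₀ (by positivity)]
  calc c T T ≤ K * (T + T) / log ((T : ℝ) + T) ^ (1 + ε) := hc T T hT hT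
    _ ≤ K * (2 ^ (k + 1) * (m + g)) / (log m + (k + 1) * log 2) ^ (1 + ε) := by
        rw [← hlog]; exact mul_div_log_rpow_le hK (by positivity) hm1 hlow hhigh
    _ = K * (m + g) * (1 / (log m + (k + 1) * log 2) ^ (1 + ε)) * 2 ^ (k + 1) := by
        field_simp

lemma le_two_pow_mul_of_gapped_subadditive (hK : 0 ≤ K) (hε : 0 < ε)
    (hsub : ∀ i j : ℕ, 0 < i → 0 < j → f (i + g + j) ≤ c i j + f i + f j)
    (hc : ∀ i j : ℕ, 0 < i → 0 < j →
      c i j ≤ K * ((i : ℝ) + j) / log ((i : ℝ) + j) ^ ((1 : ℝ) + ε))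
    {m : ℕ} (hm : 2 ≤ m) (k : ℕ) :
    f (gapTower m g k) ≤ 2 ^ k * (f m + K * (m + g) * (log m ^ (-ε) / (ε * log 2))) := by
  have hrec : ∀ k, f (gapTower m g (k + 1))
      ≤ 2 * f (gapTower m g k) + c (gapTower m g k) (gapTower m g k) := by
    intro k
    have hT := gapTower_pos (by omega : 0 < m) g k
    rw [gapTower_succ]
    linarith [hsub _ _ hT hT]
  have hlogm : (0 : ℝ) < log m := log_pos (by exact_mod_cast hm)
  calc f (gapTower m g k)
      ≤ 2 ^ k * (f (gapTower m g 0)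
          + ∑ j ∈ range k, c (gapTower m g j) (gapTower m g j) / 2 ^ (j + 1)) :=
        le_two_pow_mul_add_sum (a := fun k => f (gapTower m g k)) hrec k
    _ ≤ 2 ^ k * (f m
          + K * (m + g) * ∑ j ∈ range k, 1 / (log m + (j + 1) * log 2) ^ (1 + ε)) := by
        rw [mul_sum, gapTower_zero]
        gcongr with j
        exact cost_gapTower_div_le hK hε hc hm j
    _ ≤ 2 ^ k * (f m + K * (m + g) * (log m ^ (-ε) / (ε * log 2))) := by
        gcongr
        exact sum_one_div_rpow_le hlogm (log_pos one_lt_two) hε k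

lemma exists_le_dyadicSlope_mul_add (hK : 0 ≤ K) (hε : 0 < ε)
    (hsub : ∀ i j : ℕ, 0 < i → 0 < j → f (i + g + j) ≤ c i j + f i + f j)
    (hc : ∀ i j : ℕ, 0 < i → 0 < j →
      c i j ≤ K * ((i : ℝ) + j) / log ((i : ℝ) + j) ^ ((1 : ℝ) + ε))
    {t : ℝ} {m : ℕ} (hm : 2 ≤ m) (hfm : f m ≤ t * m) :
    ∃ B, ∀ n, 0 < n → f n ≤ dyadicSlope K ε t g m * n + B := by
  set v := t * m / (m + g) + K * log m ^ (-ε) / (ε * log 2)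
  have htower : ∀ k, f (gapTower m g k) ≤ v * (gapTower m g k + g : ℕ) := by
    intro k
    calc f (gapTower m g k)
        ≤ 2 ^ k * (f m + K * (m + g) * (log m ^ (-ε) / (ε * log 2))) :=
          le_two_pow_mul_of_gapped_subadditive hK hε hsub hc hm k
      _ ≤ 2 ^ k * (t * m + K * (m + g) * (log m ^ (-ε) / (ε * log 2))) := by gcongr
      _ = v * (gapTower m g k + g : ℕ) := by
          rw [gapTower_add_gap]; simp only [v]; push_cast; field_simp
  have hstep : ∀ k j, 0 < j → j ≤ 2 ^ k * (m + g) →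
      f (2 ^ k * (m + g) + j) - v * (2 ^ k * (m + g) + j : ℕ)
        ≤ f j - v * j + K / log m ^ (1 + ε) * (2 ^ k * (m + g) + j : ℕ) := by
    intro k j hj _
    -- `f T ≤ v (T + g)` on the tower absorbs the gap: the step costs only `c T j`.
    set T := gapTower m g k
    have hTm : m ≤ T := le_gapTower m g k
    rw [← gapTower_add_gap]
    have hcost : c T j ≤ K / log m ^ (1 + ε) * (T + g + j : ℕ) := by
      have hTj : (m : ℝ) ≤ T + j := by exact_mod_cast (by omega : m ≤ T + j)
      calc c T j ≤ K * (T + j) / log ((T : ℝ) + j) ^ (1 + ε) := hc T j (by omega) hj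
        _ ≤ K * (T + g + j : ℕ) / log m ^ (1 + ε) :=
            mul_div_log_rpow_le hK (by positivity) (by exact_mod_cast hm) hTj
              (by push_cast; linarith)
        _ = K / log m ^ (1 + ε) * (T + g + j : ℕ) := by ring
    have := htower k
    have := hsub T j (by omega) hj
    push_cast at *
    linarith
  obtain ⟨B, hB⟩ := exists_le_add_two_mul_of_dyadic_step (fun n => f n - v * n)
    (M := m + g) (by omega) (by positivity) hstep
  exact ⟨B, fun n hn => by have := hB n hn; simp only [dyadicSlope]; linarith⟩

lemma eventually_le_mul_of_frequently_le (hK : 0 ≤ K) (hε : 0 < ε)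
    (hsub : ∀ i j : ℕ, 0 < i → 0 < j → f (i + g + j) ≤ c i j + f i + f j)
    (hc : ∀ i j : ℕ, 0 < i → 0 < j →
      c i j ≤ K * ((i : ℝ) + j) / log ((i : ℝ) + j) ^ ((1 : ℝ) + ε))
    {t η : ℝ} (hη : 0 < η) (hfreq : ∃ᶠ m in atTop, f m ≤ t * m) :
    ∀ᶠ n in atTop, f n ≤ (t + η) * n := by
  have hslope : ∀ᶠ m in atTop, dyadicSlope K ε t g m < t + η / 2 :=
    (tendsto_dyadicSlope hε K t g).eventually (gt_mem_nhds (by linarith))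
  obtain ⟨m, hfm, hm, hmη⟩ :=
    (hfreq.and_eventually ((eventually_ge_atTop 2).and hslope)).exists
  obtain ⟨B, hB⟩ := exists_le_dyadicSlope_mul_add hK hε hsub hc hm hfm
  have hBn : ∀ᶠ n : ℕ in atTop, B ≤ η / 2 * n :=
    (tendsto_natCast_atTop_atTop.const_mul_atTop (half_pos hη)).eventually_ge_atTop B
  filter_upwards [hBn, eventually_gt_atTop 0] with n hBn hn
  calc f n ≤ dyadicSlope K ε t g m * n + B := hB n hn
    _ ≤ (t + η / 2) * n + η / 2 * n := by gcongr
    _ = (t + η) * n := by ring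

end GappedSubadditive

theorem gapped_subadditive_limit (f : ℕ → ℝ) (c : ℕ → ℕ → ℝ) (g : ℕ) (K ε : ℝ)
    (hK : 0 < K) (hε : 0 < ε)
    (hsub : ∀ i j : ℕ, 0 < i → 0 < j → f (i + g + j) ≤ c i j + f i + f j)
    (hc : ∀ i j : ℕ, 0 < i → 0 < j →
      c i j ≤ K * ((i : ℝ) + j) / Real.log ((i : ℝ) + j) ^ ((1 : ℝ) + ε)) :
    liminf (fun n : ℕ => ((f n / n : ℝ) : EReal)) atTop =
      limsup (fun n : ℕ => ((f n / n : ℝ) : EReal)) atTop := by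
  refine le_antisymm liminf_le_limsup (le_of_forall_gt_imp_ge_of_dense fun a ha => ?_)
  obtain ⟨t, hlt, hta⟩ := EReal.exists_between_coe_real ha
  obtain ⟨s, hts, hsa⟩ := EReal.exists_between_coe_real hta
  have hfreq : ∃ᶠ n in atTop, f n ≤ t * n := by
    refine ((frequently_lt_of_liminf_lt (by isBoundedDefault) hlt).and_eventually
      (eventually_gt_atTop 0)).mono fun n ⟨hn, hn0⟩ => ?_
    exact ((div_lt_iff₀ (Nat.cast_pos.2 hn0)).1 (EReal.coe_lt_coe_iff.1 hn)).le
  have hev := eventually_le_mul_of_frequently_le hK.le hε hsub hc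
    (sub_pos.2 (EReal.coe_lt_coe_iff.1 hts)) hfreq
  refine (limsup_le_of_le (by isBoundedDefault) ?_).trans hsa.le
  filter_upwards [hev, eventually_gt_atTop 0] with n hn hn0
  rw [add_sub_cancel] at hn
  exact EReal.coe_le_coe_iff.2 ((div_le_iff₀ (Nat.cast_pos.2 hn0)).2 hn)
end

section
/- For all positive integers k < n, the event {T_n^{(2)} ≤ k} is contained in the union ∪_{i=n−k}^{n−1} R_n^{(2)}(i), where T_n^{(2)}(x,y) = inf{m ≥ 1 : the cylinders y_0^{n−1} ∩ σ^{−m} x_0^{n−1} are non-empty} and R_n^{(2)}(i) = {(x,y) : y_{n−i}^{n−1} = x_0^{i−1}}. If moreover ν has complete grammar (every finite string has a realization under the dynamics, i.e., every concatenation occurs), the inclusion is an equality. -/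
open MeasureTheory Filter
open scoped ENNReal

/-- The shortest-path function `T_n^{(2)}(x,y)`: the least `m ≥ 1` such that the cylinders
`[y_0^{n-1}]` and `σ^{-m}[x_0^{n-1}]` intersect. -/
noncomputable def T2 {χ : Type*} (n : ℕ) (x y : ℕ → χ) : ℕ :=
  sInf {m | 1 ≤ m ∧ ∃ z : ℕ → χ, (∀ i < n, z i = y i) ∧ (∀ i < n, z (m + i) = x i)}

/-- `R_n^{(2)}(i)`: pairs `(x,y)` such that the last `i` symbols of `y_0^{n-1}`
equal the first `i` symbols of `x_0^{n-1}`. -/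
def R2 {χ : Type*} (n i : ℕ) : Set ((ℕ → χ) × (ℕ → χ)) :=
  {p | ∀ j < i, p.2 (n - i + j) = p.1 j}

/-- Complete grammar: every finite string has positive measure. -/
def CompleteGrammar {χ : Type*} [MeasurableSpace χ] (ν : Measure (ℕ → χ)) : Prop :=
  ∀ (k : ℕ) (ω : Fin k → χ), 0 < ν (cyl ω)

theorem T2_le_iff_overlap {χ : Type*} [MeasurableSpace χ] [Countable χ] [Nonempty χ]
    (ν : Measure (ℕ → χ)) [IsProbabilityMeasure ν] (k n : ℕ) (hk : 0 < k) (hkn : k < n) :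
    ({p : (ℕ → χ) × (ℕ → χ) | T2 n p.1 p.2 ≤ k} ⊆
        ⋃ i ∈ Finset.Icc (n - k) (n - 1), R2 n i) ∧
      (CompleteGrammar ν →
        {p : (ℕ → χ) × (ℕ → χ) | T2 n p.1 p.2 ≤ k} =
          ⋃ i ∈ Finset.Icc (n - k) (n - 1), R2 n i) := by
  classical
  have key : ∀ p : (ℕ → χ) × (ℕ → χ),
      T2 n p.1 p.2 ≤ k ↔ ∃ i ∈ Finset.Icc (n - k) (n - 1), p ∈ R2 (χ := χ) n i := by
    intro p
    constructor
    · intro h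
      have hne : {m | 1 ≤ m ∧ ∃ z : ℕ → χ, (∀ i < n, z i = p.2 i) ∧
          (∀ i < n, z (m + i) = p.1 i)}.Nonempty := by
        refine ⟨n, by omega, fun j => if j < n then p.2 j else p.1 (j - n), ?_, ?_⟩
        · intro i hi; simp [hi]
        · intro i hi
          have h1 : ¬ (n + i < n) := by omega
          simp [h1]
      have hmem : T2 n p.1 p.2 ∈ {m | 1 ≤ m ∧ ∃ z : ℕ → χ, (∀ i < n, z i = p.2 i) ∧
          (∀ i < n, z (m + i) = p.1 i)} := Nat.sInf_mem hne
      obtain ⟨hm1, z, hz1, hz2⟩ := hmem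
      have hmk : T2 n p.1 p.2 ≤ k := h
      generalize hgen : T2 n p.1 p.2 = m at *
      refine ⟨n - m, ?_, ?_⟩
      · simp only [Finset.mem_Icc]; omega
      · intro j hj
        have h1 : z (m + j) = p.1 j := hz2 j (by omega)
        have h2 : z (m + j) = p.2 (m + j) := hz1 (m + j) (by omega)
        have h3 : n - (n - m) + j = m + j := by omega
        rw [h3, ← h2, h1]
    · rintro ⟨i, hi, hR⟩
      simp only [Finset.mem_Icc] at hi
      have hmem : (n - i) ∈ {m | 1 ≤ m ∧ ∃ z : ℕ → χ, (∀ j < n, z j = p.2 j) ∧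
          (∀ j < n, z (m + j) = p.1 j)} := by
        refine ⟨by omega, fun j => if j < n then p.2 j else p.1 (j - (n - i)), ?_, ?_⟩
        · intro j hj; simp [hj]
        · intro j hj
          by_cases hc : n - i + j < n
          · have hji : j < i := by omega
            have := hR j hji
            simp [hc, this]
          · have h4 : n - i + j - (n - i) = j := by omega
            simp [hc, h4]
      calc T2 n p.1 p.2 ≤ n - i := Nat.sInf_le hmem
        _ ≤ k := by omega
  constructor
  · intro p hp
    obtain ⟨i, hi, hR⟩ := (key p).mp hp
    exact Set.mem_biUnion hi hR
  · intro _
    ext p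
    simp only [Set.mem_setOf_eq, Set.mem_iUnion, exists_prop]
    exact key p
end

section
/- Let μ be an ergodic stationary measure on χ^ℕ with positive entropy h > 0, and ν any stationary measure. Then liminf_{n→∞} T_n^{(2)}/n ≥ 1 almost everywhere with respect to μ × ν. -/
open MeasureTheory Filter
open scoped ENNReal

/-- The left shift on `χ^ℕ`. -/
def shift {χ : Type*} (x : ℕ → χ) : ℕ → χ := fun n => x (n + 1)

/-- `μ` is ergodic with positive entropy `h`, expressed through the
Shannon–McMillan–Breiman theorem. -/
def PositiveEntropySMB {χ : Type*} [MeasurableSpace χ] (μ : Measure (ℕ → χ)) (h : ℝ) : Prop :=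
  0 < h ∧ ∀ᵐ x ∂μ, Filter.Tendsto
    (fun n : ℕ => -(1 / (n : ℝ)) * Real.log (μ (cyl (fun i : Fin n => x (i : ℕ)))).toReal)
    Filter.atTop (nhds h)

/-!
By Shannon–McMillan–Breiman, for `μ`-a.e. `x` and any `0 < c < h`, the cylinder of `x_0^{k-1}`
has measure at most `e^{-ck}` for all large `k`. If `T_n^{(2)}(x, y) = m < (1 - q) n`, then
`y_m^{n-1} = x_0^{n-m-1}` is a match of length `i = n - m > q n`, i.e. `(x, y) ∈ R_n^{(2)}(i)`.
As `ν` is shift invariant, each such match has probability at most `e^{-c i} ≤ e^{-c q n}`, so the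
probability of a short path at time `n` is at most `(n + 1) e^{-c q n}`, which is summable, and
Borel–Cantelli gives `T_n^{(2)} / n ≥ 1 - q` eventually, almost surely.
-/

theorem mem_measurableAtom_pi {ι : Type*} {β : ι → Type*} [∀ i, MeasurableSpace (β i)]
    {x y : ∀ i, β i} (h : ∀ i, y i ∈ measurableAtom (x i)) : y ∈ measurableAtom x := by
  have hmem : ∀ s : Set (∀ i, β i), MeasurableSet s → (x ∈ s ↔ y ∈ s) := by
    intro s hs
    replace hs := MeasurableSpace.measurableSet_iSup.1 hs
    induction hs with
    | basic s hs =>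
      obtain ⟨i, hs⟩ := hs
      obtain ⟨t, ht, rfl⟩ := MeasurableSpace.measurableSet_comap.1 hs
      have hx : x i ∈ measurableAtom (y i) := by
        rw [measurableAtom_eq_of_mem (h i)]; exact mem_measurableAtom_self _
      exact ⟨fun hxt => mem_of_mem_measurableAtom (h i) ht hxt,
        fun hyt => mem_of_mem_measurableAtom hx ht hyt⟩
    | empty => simp
    | compl t _ ih => exact not_congr ih
    | iUnion f _ ih => simp only [Set.mem_iUnion, ih]
  simp only [measurableAtom, Set.mem_iInter]
  exact fun s hx hs => (hmem s hs).1 hx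

theorem summable_succ_mul_geometric {r : ℝ} (hr0 : 0 ≤ r) (hr1 : r < 1) :
    Summable fun n : ℕ => ((n : ℝ) + 1) * r ^ n := by
  have hn : Summable fun n : ℕ => (n : ℝ) ^ 1 * r ^ n :=
    summable_pow_mul_geometric_of_norm_lt_one 1 (by rwa [Real.norm_of_nonneg hr0])
  simpa [add_mul] using hn.add (summable_geometric_of_lt_one hr0 hr1)

theorem le_liminf_of_eventually_sub_le {u : ℕ → ℝ} {a : ℝ} (hbdd : IsBoundedUnder (· ≤ ·) atTop u)
    (h : ∀ j : ℕ, ∀ᶠ n in atTop, a - 1 / ((j : ℝ) + 1) ≤ u n) : a ≤ liminf u atTop := by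
  have hlim : Tendsto (fun j : ℕ => a - 1 / ((j : ℝ) + 1)) atTop (nhds a) := by
    simpa using tendsto_const_nhds.sub (tendsto_one_div_add_atTop_nhds_zero_nat (𝕜 := ℝ))
  exact le_of_tendsto' hlim fun j => le_liminf_of_le hbdd.isCoboundedUnder_ge (h j)

section ShortestPath

variable {χ : Type*}

theorem shift_iterate_apply (m : ℕ) (y : ℕ → χ) (n : ℕ) : shift^[m] y n = y (n + m) := by
  induction m generalizing y with
  | zero => rfl
  | succ m ih => rw [Function.iterate_succ_apply, ih]; rfl

theorem mem_T2_set {n m : ℕ} (x y : ℕ → χ) (hm : 1 ≤ m) (hnm : n ≤ m) :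
    m ∈ {m | 1 ≤ m ∧ ∃ z : ℕ → χ, (∀ i < n, z i = y i) ∧ (∀ i < n, z (m + i) = x i)} := by
  classical
  refine ⟨hm, fun i => if i < n then y i else x (i - m), fun i hi => if_pos hi, fun i _ => ?_⟩
  dsimp only
  rw [if_neg (by omega), Nat.add_sub_cancel_left]

theorem T2_spec (n : ℕ) (x y : ℕ → χ) :
    1 ≤ T2 n x y ∧ ∃ z : ℕ → χ, (∀ i < n, z i = y i) ∧ (∀ i < n, z (T2 n x y + i) = x i) :=
  Nat.sInf_mem ⟨n + 1, mem_T2_set x y (Nat.le_add_left 1 n) (Nat.le_succ n)⟩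

theorem T2_le {n : ℕ} (hn : 1 ≤ n) (x y : ℕ → χ) : T2 n x y ≤ n :=
  Nat.sInf_le (mem_T2_set x y hn le_rfl)

theorem mem_R2_of_T2_lt {n : ℕ} {x y : ℕ → χ} (h : T2 n x y < n) :
    (x, y) ∈ R2 n (n - T2 n x y) := by
  obtain ⟨-, z, hzy, hzx⟩ := T2_spec n x y
  intro j hj
  have hsub : n - (n - T2 n x y) + j = T2 n x y + j := by omega
  simp only [hsub]
  rw [← hzy _ (by omega), hzx j (by omega)]

theorem one_sub_le_T2_div {n : ℕ} {x y : ℕ → χ} {q : ℝ} (hq : 0 ≤ q) (hn : 0 < n)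
    (hR : ∀ i : ℕ, q * n < i → i ≤ n → (x, y) ∉ R2 n i) : 1 - q ≤ (T2 n x y : ℝ) / n := by
  have hn' : (0 : ℝ) < n := by exact_mod_cast hn
  rw [le_div_iff₀ hn']
  rcases lt_or_ge (T2 n x y) n with hlt | hge
  · have hi : ¬ q * n < ((n - T2 n x y : ℕ) : ℝ) := fun hqi =>
      hR _ hqi (Nat.sub_le _ _) (mem_R2_of_T2_lt hlt)
    rw [Nat.cast_sub hlt.le] at hi
    linarith
  · have : (n : ℝ) ≤ T2 n x y := by exact_mod_cast hge
    nlinarith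

theorem T2_div_le_one {n : ℕ} (hn : 1 ≤ n) (x y : ℕ → χ) : (T2 n x y : ℝ) / n ≤ 1 :=
  div_le_one_of_le₀ (by exact_mod_cast T2_le hn x y) (Nat.cast_nonneg n)

end ShortestPath

section Cylinders

variable {χ : Type*} [MeasurableSpace χ]

def atomCyl {k : ℕ} (ω : Fin k → χ) : Set (ℕ → χ) :=
  {x | ∀ i : Fin k, x i ∈ measurableAtom (ω i)}

theorem cyl_subset_atomCyl {k : ℕ} (ω : Fin k → χ) : cyl ω ⊆ atomCyl ω := by
  intro x hx i
  rw [hx i]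
  exact mem_measurableAtom_self _

theorem mem_atomCyl_self (x : ℕ → χ) (k : ℕ) : x ∈ atomCyl (fun i : Fin k => x i) :=
  fun _ => mem_measurableAtom_self _

theorem atomCyl_eq_of_mem {k : ℕ} {ω : Fin k → χ} {x : ℕ → χ} (hx : x ∈ atomCyl ω) :
    atomCyl ω = atomCyl (fun i : Fin k => x i) := by
  ext z
  simp only [atomCyl, Set.mem_ofPred_eq, measurableAtom_eq_of_mem (hx _)]

theorem measurableSet_atomCyl [Countable χ] {k : ℕ} (ω : Fin k → χ) :
    MeasurableSet (atomCyl ω) := by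
  have : atomCyl ω = ⋂ i : Fin k, (fun x : ℕ → χ => x i) ⁻¹' measurableAtom (ω i) := by
    ext x
    simp [atomCyl]
  rw [this]
  exact .iInter fun i => measurable_pi_apply _ (.measurableAtom_of_countable _)

/-- Cylinders need not be measurable, but every measurable set containing `cyl ω` contains
`atomCyl ω`. -/
theorem measure_cyl_eq_atomCyl (μ : Measure (ℕ → χ)) {k : ℕ} (ω : Fin k → χ) :
    μ (cyl ω) = μ (atomCyl ω) := by
  refine le_antisymm (measure_mono (cyl_subset_atomCyl ω)) ?_
  rw [← measure_toMeasurable (cyl ω)]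
  refine measure_mono fun x hx => ?_
  let x' : ℕ → χ := fun j => if hj : j < k then ω ⟨j, hj⟩ else x j
  have hx' : x' ∈ cyl ω := fun i => dif_pos i.isLt
  have hxx' : x ∈ measurableAtom x' := by
    refine mem_measurableAtom_pi fun j => ?_
    by_cases hj : j < k
    · simpa [x', hj] using hx ⟨j, hj⟩
    · simp [x', hj]
  exact mem_of_mem_measurableAtom hxx' (measurableSet_toMeasurable μ _)
    (subset_toMeasurable μ _ hx')

def cylDecaySet (μ : Measure (ℕ → χ)) (c : ℝ) (N : ℕ) : Set (ℕ → χ) :=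
  {x | ∀ k ≥ N, μ (cyl (fun i : Fin k => x i)) ≤ ENNReal.ofReal (Real.exp (-(c * k)))}

theorem ENNReal.le_ofReal_exp_of_lt_neg_log {t : ℝ≥0∞} (ht : t ≠ ∞) {c : ℝ} {k : ℕ} (hk : 0 < k)
    (hlt : c < -(1 / (k : ℝ)) * Real.log t.toReal) : t ≤ ENNReal.ofReal (Real.exp (-(c * k))) := by
  rcases eq_or_ne t 0 with rfl | h0
  · exact zero_le
  have hpos : 0 < t.toReal := ENNReal.toReal_pos h0 ht
  have hk' : (0 : ℝ) < k := by exact_mod_cast hk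
  have hlog : Real.log t.toReal < -(c * k) := by
    have hscale : -(1 / (k : ℝ)) * Real.log t.toReal * k = -Real.log t.toReal := by
      field_simp
    nlinarith [mul_lt_mul_of_pos_right hlt hk']
  rw [← ENNReal.ofReal_toReal ht]
  exact ENNReal.ofReal_le_ofReal ((Real.log_lt_iff_lt_exp hpos).1 hlog).le

theorem PositiveEntropySMB.ae_exists_mem_cylDecaySet {μ : Measure (ℕ → χ)} [IsFiniteMeasure μ]
    {h c : ℝ} (hμ : PositiveEntropySMB μ h) (hc : c < h) :
    ∀ᵐ x ∂μ, ∃ N, x ∈ cylDecaySet μ c N := by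
  filter_upwards [hμ.2] with x hx
  obtain ⟨N, hN⟩ := eventually_atTop.1 ((hx.eventually (lt_mem_nhds hc)).and
    (eventually_gt_atTop 0))
  exact ⟨N, fun k hk => ENNReal.le_ofReal_exp_of_lt_neg_log (measure_ne_top μ _)
    (hN k hk).2 (hN k hk).1⟩

/-- Sum over the disjoint atom cylinders `s` meeting `E`: by shift invariance of `ν`, each one
contributes `μ s * ν s ≤ a * ν s`. -/
theorem prod_measure_fst_preimage_inter_R2_le [Countable χ] (μ ν : Measure (ℕ → χ))
    [IsProbabilityMeasure ν] (hν : MeasurePreserving shift ν ν) {E : Set (ℕ → χ)} {a : ℝ≥0∞}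
    {n i : ℕ} (hE : ∀ x ∈ E, μ (cyl (fun j : Fin i => x j)) ≤ a) :
    μ.prod ν (Prod.fst ⁻¹' E ∩ R2 n i) ≤ a := by
  set A := (fun x : ℕ → χ => atomCyl (fun j : Fin i => x j)) '' E
  have hA : A.Countable := (Set.countable_range (atomCyl (χ := χ) (k := i))).mono <| by
    rintro _ ⟨x, -, rfl⟩
    exact ⟨_, rfl⟩
  have hcover : Prod.fst ⁻¹' E ∩ R2 n i ⊆ ⋃ s ∈ A, s ×ˢ (shift^[n - i] ⁻¹' s) := by
    rintro ⟨x, y⟩ ⟨hxE, hR⟩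
    refine Set.mem_biUnion (Set.mem_image_of_mem _ hxE) ⟨mem_atomCyl_self x i, fun j => ?_⟩
    rw [shift_iterate_apply, Nat.add_comm, hR j j.isLt]
    exact mem_measurableAtom_self _
  have hdisj : A.Pairwise Disjoint := by
    rintro _ ⟨x, -, rfl⟩ _ ⟨x', -, rfl⟩ hne
    refine Set.disjoint_left.2 fun z hz hz' => hne ?_
    exact (atomCyl_eq_of_mem hz).trans (atomCyl_eq_of_mem hz').symm
  have hle : ∀ s : A, μ s ≤ a := by
    rintro ⟨_, x, hx, rfl⟩
    rw [← measure_cyl_eq_atomCyl]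
    exact hE x hx
  calc μ.prod ν (Prod.fst ⁻¹' E ∩ R2 n i)
      ≤ ∑' s : A, μ.prod ν ((s : Set (ℕ → χ)) ×ˢ (shift^[n - i] ⁻¹' (s : Set (ℕ → χ)))) :=
        (measure_mono hcover).trans (measure_biUnion_le _ hA _)
    _ = ∑' s : A, μ s * ν s := by
        refine tsum_congr fun ⟨_, x, _, rfl⟩ => ?_
        rw [Measure.prod_prod, (hν.iterate _).measure_preimage
          (measurableSet_atomCyl _).nullMeasurableSet]
    _ ≤ ∑' s : A, a * ν s := ENNReal.tsum_le_tsum fun s => by gcongr; exact hle s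
    _ = a * ν (⋃₀ A) := by
        rw [ENNReal.tsum_mul_left, measure_sUnion hA hdisj]
        rintro _ ⟨x, -, rfl⟩
        exact measurableSet_atomCyl _
    _ ≤ a := mul_le_of_le_one_right' prob_le_one

/-- Borel–Cantelli: on `cylDecaySet μ c N`, the probability that some `R2 n i` with `i > q n`
occurs is at most `(n + 1) e^{-c q n}`, which is summable. -/
theorem ae_eventually_notMem_R2 [Countable χ] (μ ν : Measure (ℕ → χ))
    [IsProbabilityMeasure ν] (hν : MeasurePreserving shift ν ν) {c q : ℝ} (hc : 0 < c)
    (hq : 0 < q) (N : ℕ) :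
    ∀ᵐ p ∂(μ.prod ν), p.1 ∈ cylDecaySet μ c N →
      ∀ᶠ n : ℕ in atTop, ∀ i : ℕ, q * n < i → i ≤ n → p ∉ R2 n i := by
  classical
  set r := Real.exp (-(c * q))
  let long : ℕ → Finset ℕ := fun n =>
    (Finset.range (n + 1)).filter (fun i : ℕ => q * n < (i : ℝ) ∧ N ≤ i)
  let bad : ℕ → Set ((ℕ → χ) × (ℕ → χ)) := fun n =>
    ⋃ i ∈ long n, Prod.fst ⁻¹' cylDecaySet μ c N ∩ R2 n i
  have hbad : ∀ n, μ.prod ν (bad n) ≤ ENNReal.ofReal (((n : ℝ) + 1) * r ^ n) := by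
    intro n
    have hterm : ∀ i ∈ long n,
        μ.prod ν (Prod.fst ⁻¹' cylDecaySet μ c N ∩ R2 n i) ≤ ENNReal.ofReal (r ^ n) := by
      intro i hi
      obtain ⟨-, hqi, hNi⟩ := Finset.mem_filter.1 hi
      refine (prod_measure_fst_preimage_inter_R2_le μ ν hν (E := cylDecaySet μ c N)
        fun x hx => hx i hNi).trans ?_
      rw [← Real.exp_nat_mul]
      gcongr
      nlinarith
    calc μ.prod ν (bad n)
        ≤ ∑ i ∈ long n, μ.prod ν (Prod.fst ⁻¹' cylDecaySet μ c N ∩ R2 n i) :=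
          measure_biUnion_finset_le _ _
      _ ≤ ((n : ℝ≥0∞) + 1) * ENNReal.ofReal (r ^ n) := by
        refine (Finset.sum_le_sum hterm).trans ?_
        rw [Finset.sum_const, nsmul_eq_mul]
        gcongr
        exact_mod_cast (Finset.card_filter_le _ _).trans (Finset.card_range _).le
      _ = ENNReal.ofReal (((n : ℝ) + 1) * r ^ n) := by
        rw [ENNReal.ofReal_mul (by positivity)]
        norm_cast
  have hsum : ∑' n, μ.prod ν (bad n) ≠ ∞ := by
    refine ne_top_of_le_ne_top ?_ (ENNReal.tsum_le_tsum hbad)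
    rw [← ENNReal.ofReal_tsum_of_nonneg (fun n => by positivity)
      (summable_succ_mul_geometric (Real.exp_pos _).le
        (Real.exp_lt_one_iff.2 (by nlinarith)))]
    exact ENNReal.ofReal_ne_top
  have hNq : ∀ᶠ n : ℕ in atTop, (N : ℝ) ≤ q * n :=
    (tendsto_natCast_atTop_atTop.const_mul_atTop hq).eventually_ge_atTop _
  filter_upwards [ae_eventually_notMem hsum] with p hp hpE
  filter_upwards [hp, hNq] with n hn hNn i hqi hin hR
  have hNi : N ≤ i := by exact_mod_cast hNn.trans hqi.le
  exact hn (Set.mem_biUnion (Finset.mem_filter.2 ⟨Finset.mem_range.2 (Nat.lt_succ_of_le hin),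
    hqi, hNi⟩) ⟨hpE, hR⟩)

end Cylinders

theorem T2_liminf_ge_one_general {χ : Type*} [MeasurableSpace χ] [Countable χ]
    (μ ν : Measure (ℕ → χ)) [IsProbabilityMeasure μ] [IsProbabilityMeasure ν]
    (hνshift : MeasurePreserving (shift (χ := χ)) ν ν)
    (h : ℝ) (hent : PositiveEntropySMB μ h) :
    ∀ᵐ p ∂(μ.prod ν),
      1 ≤ liminf (fun n : ℕ => (T2 n p.1 p.2 : ℝ) / n) atTop := by
  have hc : 0 < h / 2 := half_pos hent.1
  have hdecay : ∀ᵐ p ∂(μ.prod ν), ∃ N, p.1 ∈ cylDecaySet μ (h / 2) N :=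
    Measure.quasiMeasurePreserving_fst.ae (hent.ae_exists_mem_cylDecaySet (half_lt_self hent.1))
  have hrare : ∀ᵐ p ∂(μ.prod ν), ∀ j N : ℕ, p.1 ∈ cylDecaySet μ (h / 2) N →
      ∀ᶠ n : ℕ in atTop, ∀ i : ℕ, 1 / ((j : ℝ) + 1) * n < i → i ≤ n → p ∉ R2 n i := by
    simp only [ae_all_iff]
    exact fun j N => ae_eventually_notMem_R2 μ ν hνshift hc (by positivity) N
  filter_upwards [hdecay, hrare] with p ⟨N, hN⟩ hp
  refine le_liminf_of_eventually_sub_le (isBoundedUnder_of_eventually_le (a := 1) ?_) fun j => ?_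
  · filter_upwards [eventually_ge_atTop 1] with n hn using T2_div_le_one hn p.1 p.2
  · filter_upwards [hp j N hN, eventually_gt_atTop 0] with n hn hn0
      using one_sub_le_T2_div (by positivity) hn0 hn

theorem T2_liminf_ge_one {χ : Type*} [MeasurableSpace χ] [Countable χ] [Nonempty χ]
    (μ ν : Measure (ℕ → χ)) [IsProbabilityMeasure μ] [IsProbabilityMeasure ν]
    (hμshift : MeasurePreserving (shift (χ := χ)) μ μ)
    (hνshift : MeasurePreserving (shift (χ := χ)) ν ν)
    (hμerg : Ergodic (shift (χ := χ)) μ)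
    (h : ℝ) (hent : PositiveEntropySMB μ h) :
    ∀ᵐ p ∂(μ.prod ν),
      1 ≤ liminf (fun n : ℕ => (T2 n p.1 p.2 : ℝ) / n) atTop :=
  T2_liminf_ge_one_general μ ν hνshift h hent
end

section
/- Let μ be ergodic with positive entropy and suppose ν satisfies the very weak specification property with gap function g(n) = o(n): for every pair of n-strings ω, ξ there exists x ∈ χ^ℕ with x_0^{n−1} = ω and x_{n+g(n)}^{2n+g(n)−1} = ξ (realizable under ν). Then T_n^{(2)}/n → 1 as n → ∞, μ × ν-almost everywhere. -/
open MeasureTheory Filter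
open scoped ENNReal

/-- The very weak specification property for `ν`, with gap function `g`:
any two `n`-strings can be realized (with positive `ν`-probability) in a single
sequence with a gap of `g n` between them. -/
def VWSP {χ : Type*} [MeasurableSpace χ] (ν : Measure (ℕ → χ)) (g : ℕ → ℕ) : Prop :=
  Filter.Tendsto (fun n : ℕ => (g n : ℝ) / n) Filter.atTop (nhds 0) ∧
    ∀ (n : ℕ) (ω ξ : Fin n → χ),
      0 < ν {x : ℕ → χ | (∀ i : Fin n, x (i : ℕ) = ω i) ∧
        (∀ i : Fin n, x (n + g n + (i : ℕ)) = ξ i)}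


/-!
The upper bound is deterministic: very weak specification glues `y_0^{n-1}` and `x_0^{n-1}` at
distance `n + g n`, so `T2 n x y ≤ n + g n = n + o(n)`.

For the lower bound, `T2 n x y = m < n` forces the last `i = n - m` symbols of `y_0^{n-1}` to
repeat `x_0^{i-1}`. By Shannon–McMillan–Breiman, `μ [x_0^{i-1}] ≤ θ ^ i` for some `θ < 1` and all
large `i`; integrating over `y` shows that the pairs with such an overlap of length `i` have
`μ × ν`-measure at most `θ ^ i`. These bounds are summable over `i > n / K` and then over `n`, so
by Borel–Cantelli `n ≤ T2 n x y + n / K` eventually, for every `K`.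

Singletons of `χ`, hence cylinders, need not be measurable. The counting is therefore done on the
quotient of `χ` by measurable indistinguishability, which has measurable singletons and does not
change the (outer) measures of cylinders.
-/

theorem measurableSet_cyl {Y : Type*} [MeasurableSpace Y] [MeasurableSingletonClass Y]
    {k : ℕ} (ω : Fin k → Y) : MeasurableSet (cyl ω) := by
  rw [show cyl ω = ⋂ i : Fin k, (fun x : ℕ → Y => x i) ⁻¹' {ω i} by ext; simp [cyl]]
  exact .iInter fun i => measurable_pi_apply _ (measurableSet_singleton _)

def measurableSetoid (χ : Type*) [MeasurableSpace χ] : Setoid χ where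
  r a b := ∀ s : Set χ, MeasurableSet s → (a ∈ s ↔ b ∈ s)
  iseqv := ⟨fun _ _ _ => Iff.rfl, fun h s hs => (h s hs).symm,
    fun h₁ h₂ s hs => (h₁ s hs).trans (h₂ s hs)⟩

abbrev MeasurableQuotient (χ : Type*) [MeasurableSpace χ] : Type _ :=
  Quotient (measurableSetoid χ)

namespace MeasurableQuotient

variable {χ : Type*} [MeasurableSpace χ]

def mk : χ → MeasurableQuotient χ := Quotient.mk''

theorem preimage_image_mk {s : Set χ} (hs : MeasurableSet s) : mk ⁻¹' (mk '' s) = s := by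
  refine subset_antisymm ?_ (Set.subset_preimage_image _ _)
  rintro a ⟨b, hb, hba⟩
  exact ((Quotient.exact' hba : (measurableSetoid χ).r b a) s hs).mp hb

theorem comap_mk :
    (inferInstance : MeasurableSpace (MeasurableQuotient χ)).comap mk =
      (inferInstance : MeasurableSpace χ) :=
  le_antisymm MeasurableSpace.comap_map_le fun _ hs =>
    ⟨_, measurableSet_quotient.mpr ((preimage_image_mk hs).symm ▸ hs), preimage_image_mk hs⟩

instance [Countable χ] : MeasurableSingletonClass (MeasurableQuotient χ) := by
  refine ⟨fun q => measurableSet_quotient.mpr ?_⟩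
  induction q using Quotient.inductionOn' with | h a => ?_
  have hsep : ∀ b : {b : χ // ¬ (measurableSetoid χ).r b a},
      ∃ s, MeasurableSet s ∧ a ∈ s ∧ (b : χ) ∉ s := by
    rintro ⟨b, hb⟩
    obtain ⟨s, hs⟩ := not_forall.mp hb
    obtain ⟨hs, hab⟩ := Classical.not_imp.mp hs
    by_cases ha : a ∈ s
    · exact ⟨s, hs, ha, fun hb => hab (iff_of_true hb ha)⟩
    · exact ⟨sᶜ, hs.compl, ha, fun hb => hab (iff_of_false hb ha)⟩
  choose s hs has hbs using hsep
  -- the class of `a` is the countable intersection of the sets separating `a` from the rest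
  convert MeasurableSet.iInter hs
  ext b
  simp only [Set.mem_preimage, Set.mem_singleton_iff, Set.mem_iInter]
  refine ⟨fun hb t => ((Quotient.exact' hb : (measurableSetoid χ).r b a) _ (hs t)).mpr (has t),
    fun hb => Quotient.sound' ?_⟩
  by_contra hba
  exact hbs ⟨b, hba⟩ (hb ⟨b, hba⟩)

def mkSeq (x : ℕ → χ) : ℕ → MeasurableQuotient χ := fun i => mk (x i)

theorem measurable_mkSeq : Measurable (mkSeq (χ := χ)) :=
  measurable_pi_lambda _ fun i => measurable_quotient_mk''.comp (measurable_pi_apply i)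

theorem comap_mkSeq :
    MeasurableSpace.comap mkSeq (MeasurableSpace.pi : MeasurableSpace (ℕ → MeasurableQuotient χ)) =
      MeasurableSpace.pi := by
  rw [show mkSeq = fun x i => (mk ∘ fun y : ℕ → χ => y i) x from rfl,
    MeasurableSpace.comap_process_pi]
  simp_rw [← MeasurableSpace.comap_comp, comap_mk]
  rfl

theorem map_mkSeq_cyl [Countable χ] (μ : Measure (ℕ → χ)) {k : ℕ} (ω : Fin k → χ) :
    μ.map mkSeq (cyl (mk ∘ ω)) = μ (cyl ω) := by
  rw [Measure.map_apply measurable_mkSeq (measurableSet_cyl _)]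
  refine le_antisymm ?_ (measure_mono fun x hx i => congrArg mk (hx i))
  rw [← measure_toMeasurable (cyl ω)]
  refine measure_mono fun x hx => ?_
  have hmeas : MeasurableSet[MeasurableSpace.comap mkSeq MeasurableSpace.pi]
      (toMeasurable μ (cyl ω)) := by
    rw [comap_mkSeq]; exact measurableSet_toMeasurable μ (cyl ω)
  obtain ⟨E, -, hEeq⟩ := MeasurableSpace.measurableSet_comap.mp hmeas
  -- Measurable sets are unions of fibres of `mkSeq`, and the fibre of `x` meets `cyl ω` at `x'`.
  let x' : ℕ → χ := fun j => if h : j < k then ω ⟨j, h⟩ else x j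
  have hx' : x' ∈ toMeasurable μ (cyl ω) := subset_toMeasurable _ _ fun i => by simp [x']
  have hmk : mkSeq x' = mkSeq x := by
    funext j
    by_cases h : j < k
    · simpa [x', mkSeq, h] using (hx ⟨j, h⟩).symm
    · simp [x', mkSeq, h]
  rw [← hEeq] at hx' ⊢
  simpa [Set.mem_preimage, hmk] using hx'

end MeasurableQuotient

section Overlap

variable {Y : Type*} [MeasurableSpace Y] [Countable Y] [MeasurableSingletonClass Y]

theorem measurableSet_R2 (n i : ℕ) : MeasurableSet (R2 n i : Set ((ℕ → Y) × (ℕ → Y))) := by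
  simp only [R2, Set.ofPred_forall]
  exact .iInter fun j => .iInter fun _ =>
    measurableSet_eq_fun ((measurable_pi_apply _).comp measurable_snd)
      ((measurable_pi_apply _).comp measurable_fst)

theorem prod_R2_inter_le (μ ν : Measure (ℕ → Y)) [SFinite μ] [IsProbabilityMeasure ν]
    (n i : ℕ) (t : ℝ≥0∞) :
    μ.prod ν (R2 n i ∩ {p | μ (cyl fun j : Fin i => p.1 j) ≤ t}) ≤ t := by
  set S := R2 n i ∩ {p : (ℕ → Y) × (ℕ → Y) | μ (cyl fun j : Fin i => p.1 j) ≤ t}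
  have hS : MeasurableSet S := (measurableSet_R2 n i).inter
    ((MeasurableSet.of_discrete (s := {a : Fin i → Y | μ (cyl a) ≤ t})).preimage
      (measurable_pi_lambda _ fun j => (measurable_pi_apply _).comp measurable_fst))
  rw [Measure.prod_apply_symm hS]
  calc ∫⁻ y, μ ((fun x => (x, y)) ⁻¹' S) ∂ν ≤ ∫⁻ _, t ∂ν := lintegral_mono fun y => ?_
    _ = t := by simp
  -- a nonempty section at `y` lies in the cylinder of the last `i` symbols of `y_0^{n-1}`
  by_cases hy : ∃ x₀, (x₀, y) ∈ S
  · obtain ⟨x₀, hx₀R, hx₀t⟩ := hy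
    refine le_trans (measure_mono (t := cyl fun j : Fin i => x₀ j) fun x hx j => ?_) hx₀t
    simpa using (hx.1 j j.2).symm.trans (hx₀R j j.2)
  · have : (fun x => (x, y)) ⁻¹' S = ∅ := Set.eq_empty_of_forall_notMem fun x hx => hy ⟨x, hx⟩
    simp [this]

end Overlap

theorem ENNReal.tsum_pow_div (θ : ℝ≥0∞) {K : ℕ} (hK : 0 < K) :
    ∑' n, θ ^ (n / K) = K * (1 - θ)⁻¹ := by
  have : NeZero K := ⟨hK.ne'⟩
  have hdiv (p : ℕ × Fin K) : (Nat.divModEquiv K).symm p / K = p.1 := by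
    rw [Nat.divModEquiv_symm_apply, add_comm, Nat.add_mul_div_right _ _ hK,
      Nat.div_eq_of_lt p.2.isLt, zero_add]
  rw [← (Nat.divModEquiv K).symm.tsum_eq]
  simp only [hdiv]
  rw [ENNReal.tsum_prod (f := fun q (_ : Fin K) => θ ^ q)]
  simp only [tsum_fintype, Finset.sum_const, Finset.card_univ, Fintype.card_fin,
    nsmul_eq_mul, ENNReal.tsum_mul_left, ENNReal.tsum_geometric]

theorem ae_eventually_lt_measure_cyl_of_mem_R2 {Y : Type*} [MeasurableSpace Y] [Countable Y]
    [MeasurableSingletonClass Y] (μ ν : Measure (ℕ → Y)) [SFinite μ] [IsProbabilityMeasure ν]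
    {θ : ℝ≥0∞} (hθ : θ < 1) {K : ℕ} (hK : 0 < K) :
    ∀ᵐ p ∂μ.prod ν, ∀ᶠ n in atTop, ∀ i, n / K < i → p ∈ R2 n i →
      θ ^ i < μ (cyl fun j : Fin i => p.1 j) := by
  set C : ℕ → Set ((ℕ → Y) × (ℕ → Y)) := fun n => ⋃ j, R2 n (n / K + j + 1) ∩
    {p | μ (cyl fun l : Fin (n / K + j + 1) => p.1 l) ≤ θ ^ (n / K + j + 1)}
  have hC (n : ℕ) : μ.prod ν (C n) ≤ θ ^ (n / K) * (1 - θ)⁻¹ :=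
    calc μ.prod ν (C n) ≤ ∑' j, θ ^ (n / K + j + 1) :=
          (measure_iUnion_le _).trans (ENNReal.tsum_le_tsum fun j => prod_R2_inter_le ..)
      _ = θ ^ (n / K) * (θ * (1 - θ)⁻¹) := by
          simp only [pow_succ, pow_add, ENNReal.tsum_mul_left, ENNReal.tsum_mul_right,
            ENNReal.tsum_geometric]
          ring
      _ ≤ θ ^ (n / K) * (1 - θ)⁻¹ := by gcongr; exact mul_le_of_le_one_left' hθ.le
  have hsum : ∑' n, μ.prod ν (C n) ≠ ∞ := by
    refine ne_top_of_le_ne_top ?_ (ENNReal.tsum_le_tsum hC)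
    have : (1 - θ)⁻¹ ≠ ∞ := ENNReal.inv_ne_top.mpr (tsub_pos_of_lt hθ).ne'
    rw [ENNReal.tsum_mul_right, ENNReal.tsum_pow_div θ hK]
    exact ENNReal.mul_ne_top (ENNReal.mul_ne_top (ENNReal.natCast_ne_top K) this) this
  filter_upwards [ae_eventually_notMem hsum] with p hp
  filter_upwards [hp] with n hn i hi hR
  by_contra! hle
  obtain ⟨j, rfl⟩ := Nat.exists_eq_add_of_lt hi
  exact hn (Set.mem_iUnion.mpr ⟨j, hR, hle⟩)

theorem PositiveEntropySMB.exists_ae_eventually_measure_cyl_le {χ : Type*} [MeasurableSpace χ]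
    {μ : Measure (ℕ → χ)} [IsFiniteMeasure μ] {h : ℝ} (hent : PositiveEntropySMB μ h) :
    ∃ θ < 1, ∀ᵐ x ∂μ, ∀ᶠ i in atTop, μ (cyl fun j : Fin i => x j) ≤ θ ^ i := by
  obtain ⟨hh, hsmb⟩ := hent
  refine ⟨ENNReal.ofReal (Real.exp (-(h / 2))),
    ENNReal.ofReal_lt_one.mpr (Real.exp_lt_one_iff.mpr (by linarith)), ?_⟩
  filter_upwards [hsmb] with x hx
  filter_upwards [hx.eventually (eventually_gt_nhds (half_lt_self hh)), eventually_gt_atTop 0]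
    with i hi hi0
  set t := (μ (cyl fun j : Fin i => x j)).toReal
  have hi0' : (0 : ℝ) < i := Nat.cast_pos.mpr hi0
  have hlog : Real.log t ≤ i * -(h / 2) := by
    rw [show -(1 / (i : ℝ)) * Real.log t = -Real.log t / i by ring, lt_div_iff₀ hi0'] at hi
    linarith
  rw [← ENNReal.ofReal_pow (Real.exp_pos _).le, ← Real.exp_nat_mul,
    ENNReal.le_ofReal_iff_toReal_le (measure_ne_top _ _) (Real.exp_pos _).le]
  exact (Real.le_exp_log t).trans (Real.exp_le_exp.mpr hlog)

section ShortestPath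

variable {χ : Type*}

def Glueable (n m : ℕ) (x y : ℕ → χ) : Prop :=
  ∃ z : ℕ → χ, (∀ i < n, z i = y i) ∧ ∀ i < n, z (m + i) = x i

theorem T2_le_of_glueable {n m : ℕ} {x y : ℕ → χ} (hm : 1 ≤ m) (hxy : Glueable n m x y) : T2 n x y ≤ m :=
  Nat.sInf_le (show m ∈ {m | 1 ≤ m ∧ Glueable n m x y} from ⟨hm, hxy⟩)

theorem one_le_T2_and_glueable {n m : ℕ} {x y : ℕ → χ} (hm : 1 ≤ m) (hxy : Glueable n m x y) :
    1 ≤ T2 n x y ∧ Glueable n (T2 n x y) x y :=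
  Nat.sInf_mem (s := {m | 1 ≤ m ∧ Glueable n m x y}) ⟨m, hm, hxy⟩

theorem mem_R2_of_glueable {n m : ℕ} {x y : ℕ → χ} (hmn : m ≤ n) (hxy : Glueable n m x y) :
    (x, y) ∈ R2 n (n - m) := by
  obtain ⟨z, hzy, hzx⟩ := hxy
  intro j hj
  change y _ = x j
  rw [show n - (n - m) + j = m + j by omega, ← hzy _ (by omega), hzx j (by omega)]

theorem VWSP.glueable [MeasurableSpace χ] {ν : Measure (ℕ → χ)} {g : ℕ → ℕ} (hspec : VWSP ν g)
    (n : ℕ) (x y : ℕ → χ) : Glueable n (n + g n) x y := by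
  obtain ⟨z, hzy, hzx⟩ := nonempty_of_measure_ne_zero (hspec.2 n (fun i => y i) (fun i => x i)).ne'
  exact ⟨z, fun i hi => hzy ⟨i, hi⟩, fun i hi => hzx ⟨i, hi⟩⟩

end ShortestPath

open MeasurableQuotient in
theorem ae_eventually_le_T2_add {χ : Type*} [MeasurableSpace χ] [Countable χ]
    (μ ν : Measure (ℕ → χ)) [IsFiniteMeasure μ] [IsProbabilityMeasure ν]
    {h : ℝ} (hent : PositiveEntropySMB μ h) {g : ℕ → ℕ} (hspec : VWSP ν g) {K : ℕ} (hK : 0 < K) :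
    ∀ᵐ p ∂μ.prod ν, ∀ᶠ n in atTop, n ≤ T2 n p.1 p.2 + n / K := by
  obtain ⟨θ, hθ, hsmb⟩ := hent.exists_ae_eventually_measure_cyl_le
  have hF := measurable_mkSeq (χ := χ)
  have : IsProbabilityMeasure (ν.map mkSeq) := Measure.isProbabilityMeasure_map hF.aemeasurable
  have hBC := ae_eventually_lt_measure_cyl_of_mem_R2 (μ.map mkSeq) (ν.map mkSeq) hθ hK
  rw [Measure.map_prod_map μ ν hF hF] at hBC
  filter_upwards [ae_of_ae_map (hF.prodMap hF).aemeasurable hBC,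
    Measure.quasiMeasurePreserving_fst.ae hsmb] with p hBCp hsmbp
  obtain ⟨I, hI⟩ := eventually_atTop.mp hsmbp
  filter_upwards [hBCp, (Nat.tendsto_div_const_atTop hK.ne').eventually_ge_atTop I,
    eventually_gt_atTop 0] with n hn hnI hn0
  by_contra! hlt
  obtain ⟨hm, hglue⟩ := one_le_T2_and_glueable (by omega) (hspec.glueable n p.1 p.2)
  set m := T2 n p.1 p.2
  have hR := mem_R2_of_glueable (by omega) hglue
  have := hn (n - m) (by omega) fun j hj => congrArg mk (hR j hj)
  exact (this.trans_le ((map_mkSeq_cyl μ _).trans_le (hI _ (by omega)))).false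

theorem tendsto_div_self_of_le_add {u g : ℕ → ℕ}
    (hg : Tendsto (fun n => (g n : ℝ) / n) atTop (nhds 0))
    (hup : ∀ᶠ n in atTop, u n ≤ n + g n) (hlow : ∀ K : ℕ, ∀ᶠ n in atTop, n ≤ u n + n / (K + 1)) :
    Tendsto (fun n => (u n : ℝ) / n) atTop (nhds 1) := by
  refine tendsto_order.mpr ⟨fun a ha => ?_, fun a ha => ?_⟩
  · obtain ⟨K, hK⟩ := exists_nat_one_div_lt (sub_pos.mpr ha)
    filter_upwards [hlow K, eventually_gt_atTop 0] with n hn hn0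
    have hn0' : (0 : ℝ) < n := Nat.cast_pos.mpr hn0
    have hdiv : ((n / (K + 1) : ℕ) : ℝ) ≤ n * (1 / (K + 1)) :=
      Nat.cast_div_le.trans_eq (by push_cast; ring)
    have hn' : (n : ℝ) ≤ u n + (n / (K + 1) : ℕ) := by exact_mod_cast hn
    rw [lt_div_iff₀ hn0']
    nlinarith [mul_lt_mul_of_pos_left hK hn0']
  · have hg' := (hg.const_add 1).eventually (eventually_lt_nhds (by simpa using ha))
    filter_upwards [hup, hg', eventually_gt_atTop 0] with n hn hgn hn0
    have hn0' : (0 : ℝ) < n := Nat.cast_pos.mpr hn0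
    have hn' : (u n : ℝ) ≤ n + g n := by exact_mod_cast hn
    rw [add_div' _ _ _ hn0'.ne', div_lt_iff₀ hn0'] at hgn
    rw [div_lt_iff₀ hn0']
    linarith

theorem T2_concentration_general {χ : Type*} [MeasurableSpace χ] [Countable χ]
    (μ ν : Measure (ℕ → χ)) [IsProbabilityMeasure μ] [IsProbabilityMeasure ν]
    (h : ℝ) (hent : PositiveEntropySMB μ h)
    (g : ℕ → ℕ) (hspec : VWSP ν g) :
    ∀ᵐ p ∂(μ.prod ν),
      Tendsto (fun n : ℕ => (T2 n p.1 p.2 : ℝ) / n) atTop (nhds 1) := by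
  have hlow : ∀ᵐ p ∂μ.prod ν, ∀ K : ℕ, ∀ᶠ n in atTop, n ≤ T2 n p.1 p.2 + n / (K + 1) :=
    ae_all_iff.mpr fun K => ae_eventually_le_T2_add μ ν hent hspec K.succ_pos
  filter_upwards [hlow] with p hp
  refine tendsto_div_self_of_le_add hspec.1 ?_ hp
  filter_upwards [eventually_gt_atTop 0] with n hn
  exact T2_le_of_glueable (by omega) (hspec.glueable n p.1 p.2)

theorem T2_concentration {χ : Type*} [MeasurableSpace χ] [Countable χ] [Nonempty χ]
    (μ ν : Measure (ℕ → χ)) [IsProbabilityMeasure μ] [IsProbabilityMeasure ν]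
    (hμshift : MeasurePreserving (shift (χ := χ)) μ μ)
    (hνshift : MeasurePreserving (shift (χ := χ)) ν ν)
    (hμerg : Ergodic (shift (χ := χ)) μ)
    (h : ℝ) (hent : PositiveEntropySMB μ h)
    (g : ℕ → ℕ) (hspec : VWSP ν g) :
    ∀ᵐ p ∂(μ.prod ν),
      Tendsto (fun n : ℕ => (T2 n p.1 p.2 : ℝ) / n) atTop (nhds 1) :=
  T2_concentration_general μ ν h hent g hspec
end
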